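/- arXiv:2507.09486 — 6 statements merged into one kernel-verified Lean document; each statement's English description precedes it below -/
import Mathlib

section
/- Let (a_j)_{j≥0} be a bounded sequence of nonnegative real numbers, and let D ≥ 0, I ≥ 0 and λ ≥ 1 be real numbers such that a_j ≤ D·λ^j·√(a_{j+1})·I for every j ≥ 0. Then a_0 ≤ D²·λ²·I². -/
/-- Square-root iteration: if a bounded nonnegative sequence satisfies
`a j ≤ D * λ^j * √(a (j+1)) * I` for all `j`, with `D, I ≥ 0` and `λ ≥ 1`,
then `a 0 ≤ D² * λ² * I²`. -/
theorem sqrt_iteration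
    (a : ℕ → ℝ) (ha0 : ∀ j, 0 ≤ a j) (hbdd : ∃ B : ℝ, ∀ j, a j ≤ B)
    (D I lam : ℝ) (hD : 0 ≤ D) (hI : 0 ≤ I) (hlam : 1 ≤ lam)
    (hrec : ∀ j : ℕ, a j ≤ D * lam ^ j * Real.sqrt (a (j + 1)) * I) :
    a 0 ≤ D ^ 2 * lam ^ 2 * I ^ 2 := by
  obtain ⟨B, hB⟩ := hbdd
  have hlam0 : (0:ℝ) < lam := lt_of_lt_of_le one_pos hlam
  rcases eq_or_lt_of_le hD with hD0 | hDpos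
  · have h0 := hrec 0
    rw [← hD0] at h0
    simp at h0
    nlinarith [ha0 0, sq_nonneg (D * lam * I)]
  rcases eq_or_lt_of_le hI with hI0 | hIpos
  · have h0 := hrec 0
    rw [← hI0] at h0
    simp at h0
    nlinarith [ha0 0, sq_nonneg (D * lam * I)]
  set c : ℝ := D ^ 2 * lam ^ 2 * I ^ 2 with hc
  have hcpos : 0 < c := by positivity
  set b : ℕ → ℝ := fun j => a j / (c * lam ^ (2 * j)) with hbdef
  have hbnn : ∀ j, 0 ≤ b j := fun j => div_nonneg (ha0 j) (by positivity)
  -- key step : b j ^ 2 ≤ b (j+1)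
  have hstep : ∀ j, b j ^ 2 ≤ b (j + 1) := by
    intro j
    have hsq : Real.sqrt (a (j + 1)) ^ 2 = a (j + 1) := Real.sq_sqrt (ha0 (j + 1))
    have h1 : a j ^ 2 ≤ (D * lam ^ j * I) ^ 2 * a (j + 1) := by
      nlinarith [hrec j, ha0 j, Real.sqrt_nonneg (a (j + 1)),
        mul_nonneg (mul_nonneg (mul_nonneg hD (le_of_lt (pow_pos hlam0 j)))
          (Real.sqrt_nonneg (a (j+1)))) hI]
    show (a j / (c * lam ^ (2 * j))) ^ 2 ≤ a (j + 1) / (c * lam ^ (2 * (j + 1)))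
    rw [div_pow, div_le_div_iff₀ (by positivity) (by positivity)]
    have hid : (D * lam ^ j * I) ^ 2 * (c * lam ^ (2 * (j + 1))) = (c * lam ^ (2 * j)) ^ 2 := by
      rw [hc]; ring
    calc a j ^ 2 * (c * lam ^ (2 * (j + 1)))
        ≤ ((D * lam ^ j * I) ^ 2 * a (j + 1)) * (c * lam ^ (2 * (j + 1))) := by
          apply mul_le_mul_of_nonneg_right h1 (by positivity)
      _ = a (j + 1) * ((D * lam ^ j * I) ^ 2 * (c * lam ^ (2 * (j + 1)))) := by ring
      _ = a (j + 1) * (c * lam ^ (2 * j)) ^ 2 := by rw [hid]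
  -- iterate : b 0 ^ (2^k) ≤ b k
  have hpow : ∀ k, b 0 ^ (2 ^ k) ≤ b k := by
    intro k
    induction k with
    | zero => simp
    | succ k ih =>
        have : b 0 ^ (2 ^ (k + 1)) = (b 0 ^ (2 ^ k)) ^ 2 := by
          rw [← pow_mul, pow_succ]
        rw [this]
        calc (b 0 ^ (2 ^ k)) ^ 2 ≤ (b k) ^ 2 :=
              pow_le_pow_left₀ (pow_nonneg (hbnn 0) _) ih 2
          _ ≤ b (k + 1) := hstep k
  -- b is bounded by B / c
  have hBc : ∀ k, b k ≤ B / c := by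
    intro k
    have hB0 : 0 ≤ B := le_trans (ha0 0) (hB 0)
    apply div_le_div₀ hB0 (hB k) hcpos
    nlinarith [one_le_pow₀ hlam (n := 2 * k)]
  -- conclude b 0 ≤ 1
  have hb01 : b 0 ≤ 1 := by
    by_contra h
    push_neg at h
    obtain ⟨n, hn⟩ := (tendsto_pow_atTop_atTop_of_one_lt h).eventually_gt_atTop (B / c) |>.exists
    have h1 : b 0 ^ n ≤ b 0 ^ (2 ^ n) :=
      pow_le_pow_right₀ (le_of_lt h) (le_of_lt (Nat.lt_two_pow_self (n := n)))
    have := le_trans h1 (le_trans (hpow n) (hBc n))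
    linarith
  have : b 0 = a 0 / c := by simp [hbdef]
  rw [this, div_le_one hcpos] at hb01
  simpa [hc] using hb01
end

section
/- Let (X, μ) be a measure space, let α > 1 and C > 0 be real numbers, and let v : X → [0,∞) be measurable with ∫_X v² dμ < ∞. Assume that for every integer k ≥ 0 one has (∫_X v^{2α^{k+1}} dμ)^{1/α} ≤ α^k · C · ∫_X v^{2α^k} dμ. Then the μ-essential supremum of v² satisfies ess sup_X v² ≤ C^{α/(α−1)} · α^{α/(α−1)²} · ∫_X v² dμ. -/
open MeasureTheory Filter Topology Finset ENNReal

/-- Measure-theoretic core of the mean value inequality for eigensections: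
iterating the reverse-Hölder-type hypothesis yields an essential sup bound
for `v²` in terms of `∫ v²`. -/
theorem essSup_le_of_reverse_holder
    {X : Type*} [MeasurableSpace X] (μ : Measure X) (α C : ℝ)
    (hα : 1 < α) (hC : 0 < C)
    (v : X → ℝ) (hv : Measurable v) (hv0 : ∀ x, 0 ≤ v x)
    (hfin : ∫⁻ x, ENNReal.ofReal (v x ^ (2 : ℝ)) ∂μ < ⊤)
    (hrec : ∀ k : ℕ,
      (∫⁻ x, ENNReal.ofReal (v x ^ (2 * α ^ (k + 1))) ∂μ) ^ (1 / α)
        ≤ ENNReal.ofReal (α ^ k * C) * ∫⁻ x, ENNReal.ofReal (v x ^ (2 * α ^ k)) ∂μ) :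
    essSup (fun x => ENNReal.ofReal (v x ^ (2 : ℝ))) μ
      ≤ ENNReal.ofReal (C ^ (α / (α - 1)) * α ^ (α / (α - 1) ^ 2))
        * ∫⁻ x, ENNReal.ofReal (v x ^ (2 : ℝ)) ∂μ := by
  have hα0 : (0 : ℝ) < α := lt_trans one_pos hα
  set x : ℝ := α⁻¹ with hxdef
  have hx0 : 0 < x := inv_pos.mpr hα0
  have hx1 : x < 1 := inv_lt_one_of_one_lt₀ hα
  set f : X → ℝ≥0∞ := fun y => ENNReal.ofReal (v y ^ (2 : ℝ)) with hfdef
  set I : ℕ → ℝ≥0∞ := fun k => ∫⁻ y, ENNReal.ofReal (v y ^ (2 * α ^ k)) ∂μ with hIdef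
  have hI0 : I 0 = ∫⁻ y, ENNReal.ofReal (v y ^ (2 : ℝ)) ∂μ := by
    simp [hIdef]
  have hI0top : I 0 ≠ ⊤ := by rw [hI0]; exact hfin.ne
  set s : ℕ → ℝ := fun k => ∑ j ∈ Finset.range k, x ^ j with hsdef
  set t : ℕ → ℝ := fun k => ∑ j ∈ Finset.range k, (j : ℝ) * x ^ j with htdef
  -- the key iterated estimate
  have key : ∀ k : ℕ, I k ≠ ⊤ ∧
      I k ^ (x ^ k) ≤ ENNReal.ofReal (C ^ (s k) * α ^ (t k)) * I 0 := by
    intro k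
    induction k with
    | zero =>
      refine ⟨hI0top, ?_⟩
      simp [hsdef, htdef, Real.rpow_zero]
    | succ k ih =>
      obtain ⟨hItop, hle⟩ := ih
      have h1 : I (k + 1) ^ (1 / α) ≤ ENNReal.ofReal (α ^ k * C) * I k := hrec k
      have hRfin : ENNReal.ofReal (α ^ k * C) * I k ≠ ⊤ :=
        ENNReal.mul_ne_top ENNReal.ofReal_ne_top hItop
      have hfin' : I (k + 1) ≠ ⊤ := by
        intro htop
        rw [htop, ENNReal.top_rpow_of_pos (by positivity : (0:ℝ) < 1 / α)] at h1
        exact hRfin (top_le_iff.mp h1)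
      refine ⟨hfin', ?_⟩
      have hxk0 : (0 : ℝ) ≤ x ^ k := (pow_pos hx0 k).le
      have hexp : x ^ (k + 1) = 1 / α * x ^ k := by
        rw [pow_succ, mul_comm, hxdef, one_div]
      calc I (k + 1) ^ (x ^ (k + 1))
          = (I (k + 1) ^ (1 / α)) ^ (x ^ k) := by
            rw [← ENNReal.rpow_mul, ← hexp]
        _ ≤ (ENNReal.ofReal (α ^ k * C) * I k) ^ (x ^ k) :=
            ENNReal.rpow_le_rpow h1 hxk0
        _ = ENNReal.ofReal (α ^ k * C) ^ (x ^ k) * I k ^ (x ^ k) :=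
            ENNReal.mul_rpow_of_nonneg _ _ hxk0
        _ ≤ ENNReal.ofReal (α ^ k * C) ^ (x ^ k)
              * (ENNReal.ofReal (C ^ (s k) * α ^ (t k)) * I 0) :=
            mul_le_mul_right hle _
        _ = ENNReal.ofReal (C ^ (s (k + 1)) * α ^ (t (k + 1))) * I 0 := by
            rw [← mul_assoc, ENNReal.ofReal_rpow_of_pos (by positivity),
              ← ENNReal.ofReal_mul (by positivity)]
            congr 2
            have hsucc : s (k + 1) = s k + x ^ k := by
              simp [hsdef, Finset.sum_range_succ]
            have htsucc : t (k + 1) = t k + (k : ℝ) * x ^ k := by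
              simp [htdef, Finset.sum_range_succ]
            have hbase : (α ^ k * C) ^ (x ^ k)
                = α ^ ((k : ℝ) * x ^ k) * C ^ (x ^ k) := by
              rw [Real.mul_rpow (by positivity) hC.le, ← Real.rpow_natCast α k,
                ← Real.rpow_mul hα0.le]
            rw [hbase, hsucc, htsucc, Real.rpow_add hC, Real.rpow_add hα0]
            ring
  -- the limit of the constants
  have hS : Tendsto s atTop (𝓝 (α / (α - 1))) := by
    have h := (hasSum_geometric_of_lt_one hx0.le hx1).tendsto_sum_nat
    have hval : (1 - x)⁻¹ = α / (α - 1) := by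
      rw [hxdef]
      rw [show (1 : ℝ) - α⁻¹ = (α - 1) / α by field_simp, inv_div]
    rwa [hval] at h
  have hT : Tendsto t atTop (𝓝 (α / (α - 1) ^ 2)) := by
    have hnorm : ‖x‖ < 1 := by rw [Real.norm_eq_abs, abs_of_pos hx0]; exact hx1
    have h := (hasSum_coe_mul_geometric_of_norm_lt_one hnorm).tendsto_sum_nat
    have hval : x / (1 - x) ^ 2 = α / (α - 1) ^ 2 := by
      have hα1 : α - 1 ≠ 0 := sub_ne_zero.mpr hα.ne'
      rw [hxdef]
      field_simp
    rwa [hval] at h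
  have hRh : Tendsto (fun k => ENNReal.ofReal (C ^ (s k) * α ^ (t k)) * I 0) atTop
      (𝓝 (ENNReal.ofReal (C ^ (α / (α - 1)) * α ^ (α / (α - 1) ^ 2)) * I 0)) := by
    refine ENNReal.Tendsto.mul_const (ENNReal.tendsto_ofReal ?_) (Or.inr hI0top)
    exact (((Real.continuousAt_const_rpow hC.ne').tendsto.comp hS).mul
      ((Real.continuousAt_const_rpow hα0.ne').tendsto.comp hT))
  -- main argument by contradiction
  by_contra hcon
  push_neg at hcon
  rw [← hI0] at hcon
  obtain ⟨b, hb1, hb2⟩ := exists_between hcon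
  have hbtop : b ≠ ⊤ := (lt_of_lt_of_le hb2 le_top).ne
  have hb0 : (0 : ℝ≥0∞) < b := lt_of_le_of_lt zero_le hb1
  set m : ℝ := b.toReal with hmdef
  have hm0 : 0 < m := ENNReal.toReal_pos hb0.ne' hbtop
  have hbm : b = ENNReal.ofReal m := (ENNReal.ofReal_toReal hbtop).symm
  set S : Set X := {y | b < f y} with hSdef
  -- S has positive measure
  have hS0 : μ S ≠ 0 := by
    intro h0
    have hae : ∀ᵐ y ∂μ, f y ≤ b := by
      rw [ae_iff]
      simpa only [not_le, hSdef] using h0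
    exact absurd (essSup_le_of_ae_le b hae) (not_le.mpr hb2)
  -- pointwise lower bound on S
  have hlow : ∀ k : ℕ, ENNReal.ofReal (m ^ (α ^ k : ℝ)) * μ S ≤ I k := by
    intro k
    have hgk : Measurable fun y => ENNReal.ofReal (v y ^ (2 * α ^ k)) :=
      ENNReal.measurable_ofReal.comp
        ((Real.continuous_rpow_const (by positivity)).measurable.comp hv)
    calc ENNReal.ofReal (m ^ (α ^ k : ℝ)) * μ S
        = ∫⁻ _ in S, ENNReal.ofReal (m ^ (α ^ k : ℝ)) ∂μ := (setLIntegral_const _ _).symm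
      _ ≤ ∫⁻ y in S, ENNReal.ofReal (v y ^ (2 * α ^ k)) ∂μ := by
          refine setLIntegral_mono hgk fun y hy => ?_
          apply ENNReal.ofReal_le_ofReal
          have hyv : m < v y ^ (2 : ℝ) := by
            have := hy
            rw [hSdef, Set.mem_setOf_eq, hfdef] at this
            exact (ENNReal.lt_ofReal_iff_toReal_lt hbtop).mp this
          calc m ^ (α ^ k : ℝ) ≤ (v y ^ (2 : ℝ)) ^ (α ^ k : ℝ) :=
                Real.rpow_le_rpow hm0.le hyv.le (by positivity)
            _ = v y ^ (2 * α ^ k) := (Real.rpow_mul (hv0 y) _ _).symm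
      _ ≤ I k := setLIntegral_le_lintegral _ _
  -- μ S is finite
  have hSfin : μ S ≠ ⊤ := by
    intro htop
    have h := hlow 0
    rw [htop, pow_zero, Real.rpow_one, ENNReal.mul_top (by simpa [hbm] using hb0.ne')] at h
    exact hI0top (top_le_iff.mp h)
  -- the chain of inequalities
  have hchain : ∀ k : ℕ, b * μ S ^ (x ^ k)
      ≤ ENNReal.ofReal (C ^ (s k) * α ^ (t k)) * I 0 := by
    intro k
    obtain ⟨hItop, hle⟩ := key k
    have hxk0 : (0 : ℝ) ≤ x ^ k := (pow_pos hx0 k).le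
    have h1 : b * μ S ^ (x ^ k)
        = (ENNReal.ofReal (m ^ (α ^ k : ℝ)) * μ S) ^ (x ^ k) := by
      rw [ENNReal.mul_rpow_of_nonneg _ _ hxk0,
        ENNReal.ofReal_rpow_of_pos (by positivity), ← Real.rpow_mul hm0.le]
      congr 2
      rw [show (α ^ k : ℝ) * x ^ k = (α * x) ^ k by rw [mul_pow],
        hxdef, mul_inv_cancel₀ hα0.ne', one_pow, Real.rpow_one, hbm]
    calc b * μ S ^ (x ^ k)
        = (ENNReal.ofReal (m ^ (α ^ k : ℝ)) * μ S) ^ (x ^ k) := h1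
      _ ≤ I k ^ (x ^ k) := ENNReal.rpow_le_rpow (hlow k) hxk0
      _ ≤ ENNReal.ofReal (C ^ (s k) * α ^ (t k)) * I 0 := hle
  -- the left side tends to b
  have hLS : Tendsto (fun k => b * μ S ^ (x ^ k)) atTop (𝓝 b) := by
    set m' : ℝ := (μ S).toReal with hm'def
    have hm'0 : 0 < m' := ENNReal.toReal_pos hS0 hSfin
    have hmu : μ S = ENNReal.ofReal m' := (ENNReal.ofReal_toReal hSfin).symm
    have hxk : Tendsto (fun k : ℕ => x ^ k) atTop (𝓝 0) :=
      tendsto_pow_atTop_nhds_zero_of_lt_one hx0.le hx1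
    have h1 : Tendsto (fun k : ℕ => m' ^ (x ^ k)) atTop (𝓝 1) := by
      have := (Real.continuousAt_const_rpow (a := m') hm'0.ne').tendsto.comp hxk
      simpa [Real.rpow_zero, Function.comp_def] using this
    have h2 : Tendsto (fun k : ℕ => μ S ^ (x ^ k)) atTop (𝓝 1) := by
      have h3 : Tendsto (fun k : ℕ => ENNReal.ofReal (m' ^ (x ^ k))) atTop
          (𝓝 (ENNReal.ofReal 1)) := ENNReal.tendsto_ofReal h1
      simp only [ENNReal.ofReal_one] at h3
      convert h3 using 2 with k
      rw [hmu, ENNReal.ofReal_rpow_of_pos hm'0]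
    have := ENNReal.Tendsto.const_mul (a := b) h2 (Or.inl one_ne_zero)
    simpa using this
  -- conclude
  have hfinal : b ≤ ENNReal.ofReal (C ^ (α / (α - 1)) * α ^ (α / (α - 1) ^ 2)) * I 0 :=
    le_of_tendsto_of_tendsto' hLS hRh hchain
  exact absurd hfinal (not_le.mpr hb1)
end

section
/- For a real number T > 0 define r : [0, T) → ℝ by r(t) = 1 + (√2 − 1)·√(2t/T) for 0 ≤ t < T/2 and r(t) = (T/(T − t))^{1/2} for T/2 ≤ t < T. Then the improper integral ∫₀^T (r(t) − 2)²/(r(t) − 1) dt converges and satisfies ∫₀^T (r(t) − 2)²/(r(t) − 1) dt ≤ (21/10)·T. -/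
open MeasureTheory Set
set_option maxHeartbeats 2000000 in

/-- For the Davies exponent function `r(t)`, the improper integral
`∫₀ᵀ (r(t)-2)²/(r(t)-1) dt` converges and is at most `(21/10)·T`. -/
theorem integral_sub_two_sq_div_le
    (T : ℝ) (hT : 0 < T) (r : ℝ → ℝ)
    (hr : ∀ t, r t = if t < T / 2
        then 1 + (Real.sqrt 2 - 1) * Real.sqrt (2 * t / T)
        else Real.sqrt (T / (T - t))) :
    IntegrableOn (fun t => (r t - 2) ^ 2 / (r t - 1)) (Set.Ioo 0 T) volume ∧
      ∫ t in Set.Ioo (0 : ℝ) T, (r t - 2) ^ 2 / (r t - 1) ≤ (21 / 10) * T := by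
  have hreq : r = fun t => if t < T / 2
      then 1 + (Real.sqrt 2 - 1) * Real.sqrt (2 * t / T)
      else Real.sqrt (T / (T - t)) := funext hr
  set s : ℝ := Real.sqrt 2 with hsdef
  have hs0 : (0:ℝ) ≤ s := Real.sqrt_nonneg 2
  have hs2 : s ^ 2 = 2 := Real.sq_sqrt (by norm_num)
  have hs1 : (1:ℝ) < s := by nlinarith
  set v : ℝ := Real.sqrt (T/2) with hvdef
  have hv2 : v ^ 2 = T / 2 := Real.sq_sqrt (by positivity)
  have hv0 : (0:ℝ) < v := Real.sqrt_pos.mpr (by positivity)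
  have hTs : Real.sqrt T = s * v := by
    rw [hsdef, hvdef, ← Real.sqrt_mul (by norm_num : (0:ℝ) ≤ 2)]
    congr 1; ring
  set g₁ : ℝ → ℝ := fun t => ((s-1) * v⁻¹) * t ^ ((1:ℝ)/2) + (-2)
      + ((s+1) * v) * t ^ (-(1:ℝ)/2) with hg₁
  set g₂ : ℝ → ℝ := fun u => (s*v) * u ^ (-(1:ℝ)/2) + (-3) + (s*v)⁻¹ * u ^ ((1:ℝ)/2)
      + T⁻¹ * u + ((2+s) * ((s*v)*T)⁻¹) * u ^ ((3:ℝ)/2) with hg₂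
  -- pointwise identity on the first piece
  have h₁ : ∀ t ∈ Ioo (0:ℝ) (T/2), (r t - 2) ^ 2 / (r t - 1) = g₁ t := by
    intro t ht
    obtain ⟨ht0, htT⟩ := ht
    have hst : 0 < Real.sqrt t := Real.sqrt_pos.mpr ht0
    have hx : Real.sqrt (2*t/T) = v⁻¹ * Real.sqrt t := by
      rw [eq_inv_mul_iff_mul_eq₀ hv0.ne', hvdef, ← Real.sqrt_mul (by positivity)]
      congr 1
      field_simp
    have hrp1 : t ^ ((1:ℝ)/2) = Real.sqrt t := (Real.sqrt_eq_rpow t).symm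
    have hrp2 : t ^ (-(1:ℝ)/2) = (Real.sqrt t)⁻¹ := by
      rw [show (-(1:ℝ)/2) = -((1:ℝ)/2) by ring, Real.rpow_neg ht0.le, hrp1]
    rw [hr t, if_pos htT, hx]
    simp only [hg₁, hrp1, hrp2]
    have hX : 0 < (s-1) * (v⁻¹ * Real.sqrt t) :=
      mul_pos (by linarith) (mul_pos (inv_pos.mpr hv0) hst)
    have hXY : ((s+1) * v * (Real.sqrt t)⁻¹) * ((s-1) * (v⁻¹ * Real.sqrt t)) = 1 := by
      field_simp
      linear_combination hs2
    rw [div_eq_iff (ne_of_gt (by linarith [hX] :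
      (0:ℝ) < 1 + (s-1) * (v⁻¹ * Real.sqrt t) - 1))]
    linear_combination (-1 : ℝ) * hXY
  -- pointwise bound and nonnegativity on the second piece
  have h₂ : ∀ t ∈ Ioo (T/2) T,
      (r t - 2) ^ 2 / (r t - 1) ≤ g₂ (T - t) ∧ 0 ≤ (r t - 2) ^ 2 / (r t - 1) := by
    intro t ht
    obtain ⟨ht1, ht2⟩ := ht
    have hu0 : 0 < T - t := by linarith
    rw [hr t, if_neg (not_lt.mpr ht1.le)]
    set R : ℝ := Real.sqrt (T/(T-t)) with hR
    set W : ℝ := Real.sqrt ((T-t)/T) with hW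
    have hW0 : 0 < W := Real.sqrt_pos.mpr (by positivity)
    have hR0 : 0 < R := Real.sqrt_pos.mpr (by positivity)
    have hRW : R * W = 1 := by
      rw [hR, hW, ← Real.sqrt_mul (by positivity)]
      rw [show T/(T-t) * ((T-t)/T) = 1 by field_simp]
      exact Real.sqrt_one
    have hWs : W * s ≤ 1 := by
      rw [hW, hsdef, ← Real.sqrt_mul (by positivity)]
      rw [show (1:ℝ) = Real.sqrt 1 from Real.sqrt_one.symm]
      apply Real.sqrt_le_sqrt
      rw [div_mul_eq_mul_div, div_le_one hT]
      linarith
    have hW1 : W < 1 := by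
      nlinarith [mul_pos hW0 (by linarith : (0:ℝ) < s - 1)]
    have hR1 : 1 < R := by
      nlinarith [mul_pos hR0 (by linarith : (0:ℝ) < 1 - W), hRW]
    have hsqu : Real.sqrt (T - t) = W * (s * v) := by
      rw [← hTs, hW, ← Real.sqrt_mul (by positivity)]
      congr 1
      field_simp
    have hrpa : (T-t) ^ ((1:ℝ)/2) = W * (s*v) := by
      rw [← Real.sqrt_eq_rpow]; exact hsqu
    have hrpb : (T-t) ^ (-(1:ℝ)/2) = (W * (s*v))⁻¹ := by
      rw [show (-(1:ℝ)/2) = -((1:ℝ)/2) by ring, Real.rpow_neg hu0.le, hrpa]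
    have hrpc : (T-t) ^ ((3:ℝ)/2) = (W * (s*v))^3 := by
      rw [show ((3:ℝ)/2) = (1/2) * ((3:ℕ):ℝ) by norm_num, Real.rpow_mul hu0.le,
        Real.rpow_natCast, ← Real.sqrt_eq_rpow, hsqu]
    have hW2 : W^2 = (T-t)/T := Real.sq_sqrt (by positivity)
    have hsv2 : (s*v)^2 = T := by nlinarith
    have hsv0 : (0:ℝ) < s * v := mul_pos (by linarith) hv0
    have hRinv : R = W⁻¹ := by
      field_simp
      linear_combination hRW
    have hu : T - t = W^2 * T := by
      rw [hW2]; field_simp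
    have hg2val : g₂ (T - t) = R - 3 + W + W^2 + (2+s)*W^3 := by
      simp only [hg₂, hrpa, hrpb, hrpc]
      rw [hRinv, hu, ← hsv2]
      field_simp
      ring
    rw [hg2val]
    constructor
    · rw [div_le_iff₀ (by linarith : (0:ℝ) < R - 1)]
      have h5 : (2+s)*W ≤ 1+s := by
        nlinarith [mul_le_mul_of_nonneg_left hWs hs0, hW0.le, hs2, hWs]
      have key2 : (R - 3 + W + W^2 + (2+s)*W^3)*(R-1) - (R-2)^2
          = W^2*((1+s) - (2+s)*W) := by
        linear_combination (1 + W + (2+s)*W^2) * hRW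
      nlinarith [key2, mul_nonneg (sq_nonneg W) (by linarith : (0:ℝ) ≤ (1+s) - (2+s)*W)]
    · exact div_nonneg (sq_nonneg _) (by linarith)
  -- measurability
  have hfm : Measurable fun t => (r t - 2) ^ 2 / (r t - 1) := by
    have hrm : Measurable r := by
      rw [hreq]
      apply Measurable.ite
      · exact measurableSet_lt measurable_id measurable_const
      · fun_prop
      · exact Measurable.sqrt (measurable_const.div (measurable_const.sub measurable_id))
    exact ((hrm.sub measurable_const).pow_const 2).div (hrm.sub measurable_const)
  have hT2 : (0:ℝ) ≤ T/2 := by linarith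
  -- interval integrability of the comparison functions
  have hg₁ii : IntervalIntegrable g₁ volume 0 (T/2) := by
    rw [hg₁]
    apply IntervalIntegrable.add
    apply IntervalIntegrable.add
    · exact (intervalIntegral.intervalIntegrable_rpow' (by norm_num)).const_mul _
    · exact intervalIntegrable_const
    · exact (intervalIntegral.intervalIntegrable_rpow' (by norm_num)).const_mul _
  have hg₂ii : IntervalIntegrable g₂ volume 0 (T/2) := by
    rw [hg₂]
    apply IntervalIntegrable.add
    apply IntervalIntegrable.add
    apply IntervalIntegrable.add
    apply IntervalIntegrable.add
    · exact (intervalIntegral.intervalIntegrable_rpow' (by norm_num)).const_mul _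
    · exact intervalIntegrable_const
    · exact (intervalIntegral.intervalIntegrable_rpow' (by norm_num)).const_mul _
    · exact intervalIntegral.intervalIntegrable_id.const_mul _
    · exact (intervalIntegral.intervalIntegrable_rpow' (by norm_num)).const_mul _
  -- integrability of f on the first piece
  have hfint1 : IntegrableOn (fun t => (r t - 2) ^ 2 / (r t - 1)) (Ioo 0 (T/2)) volume := by
    apply (integrableOn_congr_fun h₁ measurableSet_Ioo).mpr
    exact (intervalIntegrable_iff_integrableOn_Ioo_of_le hT2).mp hg₁ii
  -- integrability on the second piece
  have hg₂comp : IntegrableOn (fun t => g₂ (T - t)) (Ioo (T/2) T) volume := by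
    have h' := (hg₂ii.comp_sub_left T).symm
    rw [show T - T/2 = T/2 by ring, show T - 0 = T by ring] at h'
    exact (intervalIntegrable_iff_integrableOn_Ioo_of_le (by linarith)).mp h'
  have hfint2 : IntegrableOn (fun t => (r t - 2) ^ 2 / (r t - 1)) (Ioo (T/2) T) volume := by
    apply Integrable.mono' hg₂comp hfm.aestronglyMeasurable.restrict
    rw [ae_restrict_iff' measurableSet_Ioo]
    filter_upwards with t ht
    rw [Real.norm_eq_abs, abs_of_nonneg (h₂ t ht).2]
    exact (h₂ t ht).1
  have hsplit : Ioo (0:ℝ) T = Ioo 0 (T/2) ∪ Ico (T/2) T :=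
    (Set.Ioo_union_Ico_eq_Ioo (by linarith) (by linarith)).symm
  have hdisj : Disjoint (Ioo (0:ℝ) (T/2)) (Ico (T/2) T) := by
    apply Set.disjoint_left.mpr
    rintro x ⟨_, hx2⟩ ⟨hx3, _⟩
    exact absurd hx3 (not_le.mpr hx2)
  have hfint2' : IntegrableOn (fun t => (r t - 2) ^ 2 / (r t - 1)) (Ico (T/2) T) volume := by
    rwa [integrableOn_Ico_iff_integrableOn_Ioo]
  have hint : IntegrableOn (fun t => (r t - 2) ^ 2 / (r t - 1)) (Ioo 0 T) volume := by
    rw [hsplit]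
    exact hfint1.union hfint2'
  refine ⟨hint, ?_⟩
  have hsplitint : ∫ t in Ioo (0:ℝ) T, (r t - 2) ^ 2 / (r t - 1)
      = (∫ t in Ioo (0:ℝ) (T/2), (r t - 2) ^ 2 / (r t - 1))
        + ∫ t in Ioo (T/2) T, (r t - 2) ^ 2 / (r t - 1) := by
    rw [hsplit, setIntegral_union hdisj measurableSet_Ico hfint1 hfint2',
      integral_Ico_eq_integral_Ioo]
  have hA : (T/2:ℝ) ^ ((1:ℝ)/2+1) = v^3 := by
    rw [show ((1:ℝ)/2+1) = (1/2) * ((3:ℕ):ℝ) by norm_num, Real.rpow_mul (by positivity),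
      Real.rpow_natCast, ← Real.sqrt_eq_rpow, hvdef]
  have hB : (T/2:ℝ) ^ (-(1:ℝ)/2+1) = v := by
    rw [show (-(1:ℝ)/2+1) = (1:ℝ)/2 by norm_num, ← Real.sqrt_eq_rpow, hvdef]
  have hC : (T/2:ℝ) ^ ((3:ℝ)/2+1) = v^5 := by
    rw [show ((3:ℝ)/2+1) = (1/2) * ((5:ℕ):ℝ) by norm_num, Real.rpow_mul (by positivity),
      Real.rpow_natCast, ← Real.sqrt_eq_rpow, hvdef]
  have h0A : (0:ℝ) ^ ((1:ℝ)/2+1) = 0 := Real.zero_rpow (by norm_num)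
  have h0B : (0:ℝ) ^ (-(1:ℝ)/2+1) = 0 := Real.zero_rpow (by norm_num)
  have h0C : (0:ℝ) ^ ((3:ℝ)/2+1) = 0 := Real.zero_rpow (by norm_num)
  have hT' : T = 2*v^2 := by linarith
  have hsne : s ≠ 0 := by linarith
  -- value of the first piece
  have hval1 : ∫ t in Ioo (0:ℝ) (T/2), (r t - 2) ^ 2 / (r t - 1) = ((4*s - 1)/3) * T := by
    rw [setIntegral_congr_fun measurableSet_Ioo h₁, ← integral_Ioc_eq_integral_Ioo,
      ← intervalIntegral.integral_of_le hT2]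
    simp only [hg₁]
    rw [intervalIntegral.integral_add (((intervalIntegral.intervalIntegrable_rpow' (by norm_num)).const_mul _).add
        intervalIntegrable_const) ((intervalIntegral.intervalIntegrable_rpow' (by norm_num)).const_mul _),
      intervalIntegral.integral_add ((intervalIntegral.intervalIntegrable_rpow' (by norm_num)).const_mul _)
        intervalIntegrable_const,
      intervalIntegral.integral_const_mul, intervalIntegral.integral_const_mul,
      intervalIntegral.integral_const,
      integral_rpow (Or.inl (by norm_num)), integral_rpow (Or.inl (by norm_num)),
      hA, hB, h0A, h0B]
    rw [hT']
    field_simp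
    ring
  -- bound for the second piece
  have hval2 : ∫ t in Ioo (T/2) T, (r t - 2) ^ 2 / (r t - 1)
      ≤ s*T - (3/2)*T + (s/6)*T + T/8 + ((s+1)/10)*T := by
    have hmono : ∫ t in Ioo (T/2) T, (r t - 2) ^ 2 / (r t - 1)
        ≤ ∫ t in Ioo (T/2) T, g₂ (T - t) :=
      setIntegral_mono_on hfint2 hg₂comp measurableSet_Ioo (fun t ht => (h₂ t ht).1)
    refine hmono.trans ?_
    have hchg : ∫ t in Ioo (T/2) T, g₂ (T - t) = ∫ u in (0:ℝ)..(T/2), g₂ u := by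
      rw [← integral_Ioc_eq_integral_Ioo, ← intervalIntegral.integral_of_le (by linarith),
        intervalIntegral.integral_comp_sub_left g₂ T,
        show T - T = 0 by ring, show T - T/2 = T/2 by ring]
    rw [hchg]
    simp only [hg₂]
    rw [intervalIntegral.integral_add (((((intervalIntegral.intervalIntegrable_rpow' (by norm_num)).const_mul _).add
          intervalIntegrable_const).add
          ((intervalIntegral.intervalIntegrable_rpow' (by norm_num)).const_mul _)).add
          (intervalIntegral.intervalIntegrable_id.const_mul _))
        ((intervalIntegral.intervalIntegrable_rpow' (by norm_num)).const_mul _),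
      intervalIntegral.integral_add ((((intervalIntegral.intervalIntegrable_rpow' (by norm_num)).const_mul _).add
          intervalIntegrable_const).add
          ((intervalIntegral.intervalIntegrable_rpow' (by norm_num)).const_mul _))
        (intervalIntegral.intervalIntegrable_id.const_mul _),
      intervalIntegral.integral_add (((intervalIntegral.intervalIntegrable_rpow' (by norm_num)).const_mul _).add
          intervalIntegrable_const)
        ((intervalIntegral.intervalIntegrable_rpow' (by norm_num)).const_mul _),
      intervalIntegral.integral_add ((intervalIntegral.intervalIntegrable_rpow' (by norm_num)).const_mul _)
        intervalIntegrable_const,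
      intervalIntegral.integral_const_mul, intervalIntegral.integral_const_mul,
      intervalIntegral.integral_const_mul, intervalIntegral.integral_const_mul,
      intervalIntegral.integral_const, integral_id,
      integral_rpow (Or.inl (by norm_num)), integral_rpow (Or.inl (by norm_num)),
      integral_rpow (Or.inl (by norm_num)),
      hA, hB, hC, h0A, h0B, h0C]
    apply le_of_eq
    rw [hT']
    field_simp
    linear_combination (-15360*v^5) * hs2
  rw [hsplitint, hval1]
  have hsle : s ≤ 445/312 := by nlinarith
  have hmul : s * T ≤ (445/312) * T := mul_le_mul_of_nonneg_right hsle hT.le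
  linarith [hval2, hmul]
end

section
/- For a real number T > 0 define r : [0, T) → ℝ by r(t) = 1 + (√2 − 1)·√(2t/T) for 0 ≤ t < T/2 and r(t) = (T/(T − t))^{1/2} for T/2 ≤ t < T. Then ∫₀^T (r(t) − 1)/r(t)² dt ≤ T/5. -/
open MeasureTheory Set

/-- For the Davies exponent function `r(t)`, one has
`∫₀ᵀ (r(t)-1)/r(t)² dt ≤ T/5`. -/
theorem integral_sub_one_div_sq_le
    (T : ℝ) (hT : 0 < T) (r : ℝ → ℝ)
    (hr : ∀ t, r t = if t < T / 2
        then 1 + (Real.sqrt 2 - 1) * Real.sqrt (2 * t / T)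
        else Real.sqrt (T / (T - t))) :
    ∫ t in Set.Ioo (0 : ℝ) T, (r t - 1) / (r t) ^ 2 ≤ T / 5 := by
  have hTne : T ≠ 0 := ne_of_gt hT
  set s : ℝ := Real.sqrt 2 with hs
  have hs2 : s ^ 2 = 2 := Real.sq_sqrt (by norm_num)
  have hs0 : 0 ≤ s := Real.sqrt_nonneg 2
  have hslb : 1.414 ≤ s := by nlinarith
  have hsub : s ≤ 1.41422 := by nlinarith
  set a : ℝ := s - 1 with ha
  have ha0 : 0 < a := by rw [ha]; linarith
  set f : ℝ → ℝ := fun t => (r t - 1) / (r t) ^ 2 with hf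
  set g1 : ℝ → ℝ := fun t =>
    a * Real.sqrt (2 * t / T) / (1 + a * Real.sqrt (2 * t / T)) ^ 2 with hg1
  set g2 : ℝ → ℝ := fun t => Real.sqrt ((T - t) / T) - (T - t) / T with hg2
  have hden : ∀ x : ℝ, (1 + a * Real.sqrt (2 * x / T)) ^ 2 ≠ 0 := by
    intro x
    have h := Real.sqrt_nonneg (2 * x / T)
    have : 0 < 1 + a * Real.sqrt (2 * x / T) := by nlinarith
    positivity
  have hc1 : Continuous g1 := by
    apply Continuous.div (by fun_prop) (by fun_prop) hden
  have hc2 : Continuous g2 := by fun_prop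
  -- f = g1 on (0, T/2]
  have heq1 : EqOn f g1 (Ioc 0 (T / 2)) := by
    intro t ht
    simp only [hf, hg1]
    rcases lt_or_eq_of_le ht.2 with h | h
    · rw [hr t, if_pos h]
      congr 1
      ring
    · rw [hr t, if_neg (by rw [h]; exact lt_irrefl _), h]
      have e1 : T - T / 2 = T / 2 := by ring
      have e2 : T / (T / 2) = 2 := by field_simp
      have e3 : 2 * (T / 2) / T = 1 := by field_simp
      rw [e1, e2, e3, Real.sqrt_one, ← hs]
      have h1 : 1 + a * 1 = s := by rw [ha]; ring
      rw [h1]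
      congr 1
      rw [ha]; ring
  -- f = g2 on (T/2, T]
  have heq2 : EqOn f g2 (Ioc (T / 2) T) := by
    intro t ht
    have hnlt : ¬ t < T / 2 := not_lt.mpr (le_of_lt ht.1)
    simp only [hf, hg2]
    rw [hr t, if_neg hnlt]
    rcases lt_or_eq_of_le ht.2 with h | h
    · have hst : 0 < T - t := by linarith
      have e1 := Real.sqrt_div hT.le (T - t)
      have e2 := Real.sqrt_div hst.le T
      rw [e1, e2]
      set u := Real.sqrt (T - t) with hu
      set v := Real.sqrt T with hv
      have hu2 : u ^ 2 = T - t := Real.sq_sqrt hst.le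
      have hv2 : v ^ 2 = T := Real.sq_sqrt hT.le
      have hu0 : 0 < u := Real.sqrt_pos.mpr hst
      have hv0 : 0 < v := Real.sqrt_pos.mpr hT
      rw [← hu2, ← hv2]
      field_simp
    · rw [h]
      norm_num
  -- integrability
  have hint1 : IntegrableOn f (Ioc 0 (T / 2)) :=
    (hc1.integrableOn_Ioc).congr_fun heq1.symm measurableSet_Ioc
  have hint2 : IntegrableOn f (Ioc (T / 2) T) :=
    (hc2.integrableOn_Ioc).congr_fun heq2.symm measurableSet_Ioc
  -- split the integral
  have hsplit : ∫ t in Ioo (0 : ℝ) T, f t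
      = (∫ t in (0 : ℝ)..(T / 2), g1 t) + ∫ t in (T / 2)..T, g2 t := by
    rw [← integral_Ioc_eq_integral_Ioo,
      ← Ioc_union_Ioc_eq_Ioc (by linarith : (0 : ℝ) ≤ T / 2) (by linarith : T / 2 ≤ T),
      setIntegral_union
        (Ioc_disjoint_Ioc.mpr (le_trans (min_le_left _ _) (le_max_right _ _)))
        measurableSet_Ioc hint1 hint2,
      setIntegral_congr_fun measurableSet_Ioc heq1,
      setIntegral_congr_fun measurableSet_Ioc heq2,
      intervalIntegral.integral_of_le (by linarith : (0:ℝ) ≤ T / 2),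
      intervalIntegral.integral_of_le (by linarith : T / 2 ≤ T)]
  -- substitution for the first piece
  have hφ : ∀ x ∈ uIcc (0 : ℝ) 1, HasDerivAt (fun u : ℝ => T * u ^ 2 / 2) (T * x) x := by
    intro x _
    have h := ((hasDerivAt_pow 2 x).const_mul T).div_const 2
    convert h using 1
    · rfl
    · rfl
    push_cast
    ring
  have hsub1 : ∫ t in (0 : ℝ)..(T / 2), g1 t
      = ∫ u in (0 : ℝ)..1, (T * u) * (a * u / (1 + a * u) ^ 2) := by
    have h := intervalIntegral.integral_comp_smul_deriv hφ (by fun_prop) hc1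
    simp only [Function.comp] at h
    norm_num at h
    rw [← h]
    apply intervalIntegral.integral_congr
    intro x hx
    rw [Set.uIcc_of_le (by norm_num : (0:ℝ) ≤ 1)] at hx
    have hx0 : 0 ≤ x := hx.1
    have e : 2 * (T * x ^ 2 / 2) / T = x ^ 2 := by field_simp
    simp only [hg1, smul_eq_mul]
    rw [e, Real.sqrt_sq hx0]
  -- substitution for the second piece
  have hφ2 : ∀ x ∈ uIcc (1 : ℝ) 0, HasDerivAt (fun u : ℝ => T - T * u ^ 2 / 2) (-(T * x)) x := by
    intro x _
    have h := (hasDerivAt_const x T).sub (((hasDerivAt_pow 2 x).const_mul T).div_const 2)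
    convert h using 1
    · rfl
    · rfl
    · rfl
    push_cast
    ring
  have hsub2 : ∫ t in (T / 2)..T, g2 t
      = ∫ u in (0 : ℝ)..1, (T * u) * (s / 2 * u - u ^ 2 / 2) := by
    have h := intervalIntegral.integral_comp_smul_deriv hφ2 (by fun_prop) hc2
    simp only [Function.comp] at h
    norm_num at h
    have e1 : T - T / 2 = T / 2 := by ring
    rw [e1] at h
    rw [← h, intervalIntegral.integral_symm]
    simp only [intervalIntegral.integral_neg, neg_neg]
    apply intervalIntegral.integral_congr
    intro x hx
    rw [Set.uIcc_of_le (by norm_num : (0:ℝ) ≤ 1)] at hx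
    have hx0 : 0 ≤ x := hx.1
    simp only [hg2, smul_eq_mul, neg_mul, neg_neg, neg_sub]
    have e2 : T - (T - T * x ^ 2 / 2) = T * x ^ 2 / 2 := by ring
    have e3 : (T * x ^ 2 / 2) / T = x ^ 2 / 2 := by field_simp
    rw [e2, e3]
    have e4 : Real.sqrt (x ^ 2 / 2) = x / s := by
      rw [Real.sqrt_div (sq_nonneg x), Real.sqrt_sq hx0, ← hs]
    rw [e4]
    have hsne : s ≠ 0 := by positivity
    field_simp
    linear_combination (-x ^ 2) * hs2
  -- bound the first polynomial-type integral
  have hI1 : ∫ u in (0 : ℝ)..1, (T * u) * (a * u / (1 + a * u) ^ 2)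
      ≤ T * (a / 3 - a ^ 2 / 2 + 3 * a ^ 3 / 5 - 2 * a ^ 4 / 3 + 5 * a ^ 5 / 7) := by
    have hmono : ∫ u in (0 : ℝ)..1, (T * u) * (a * u / (1 + a * u) ^ 2)
        ≤ ∫ u in (0 : ℝ)..1,
            T * (a * u ^ 2 - 2 * a ^ 2 * u ^ 3 + 3 * a ^ 3 * u ^ 4
              - 4 * a ^ 4 * u ^ 5 + 5 * a ^ 5 * u ^ 6) := by
      apply intervalIntegral.integral_mono_on (by norm_num)
      · apply ContinuousOn.intervalIntegrable
        apply ContinuousOn.mul (by fun_prop)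
        apply ContinuousOn.div (by fun_prop) (by fun_prop)
        intro x hx
        rw [Set.uIcc_of_le (by norm_num : (0:ℝ) ≤ 1)] at hx
        have : 0 < 1 + a * x := by nlinarith [hx.1]
        positivity
      · apply Continuous.intervalIntegrable
        fun_prop
      · intro x hx
        have hx0 : 0 ≤ x := hx.1
        have hd1 : 0 < 1 + a * x := by nlinarith [mul_nonneg ha0.le hx0]
        have hd : 0 < (1 + a * x) ^ 2 := pow_pos hd1 2
        rw [mul_div_assoc', div_le_iff₀ hd]
        nlinarith [mul_nonneg (mul_nonneg hT.le hx0) (pow_nonneg (mul_nonneg ha0.le hx0) 6),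
          mul_nonneg (mul_nonneg hT.le hx0) (pow_nonneg (mul_nonneg ha0.le hx0) 7)]
    have hval : ∫ u in (0 : ℝ)..1,
        T * (a * u ^ 2 - 2 * a ^ 2 * u ^ 3 + 3 * a ^ 3 * u ^ 4
          - 4 * a ^ 4 * u ^ 5 + 5 * a ^ 5 * u ^ 6)
        = T * (a / 3 - a ^ 2 / 2 + 3 * a ^ 3 / 5 - 2 * a ^ 4 / 3 + 5 * a ^ 5 / 7) := by
      have hF : ∀ x ∈ uIcc (0 : ℝ) 1,
          HasDerivAt (fun u : ℝ => T * (a * u ^ 3 / 3 - a ^ 2 * u ^ 4 / 2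
            + 3 * a ^ 3 * u ^ 5 / 5 - 2 * a ^ 4 * u ^ 6 / 3 + 5 * a ^ 5 * u ^ 7 / 7))
            (T * (a * x ^ 2 - 2 * a ^ 2 * x ^ 3 + 3 * a ^ 3 * x ^ 4
              - 4 * a ^ 4 * x ^ 5 + 5 * a ^ 5 * x ^ 6)) x := by
        intro x _
        have h3 := hasDerivAt_pow 3 x
        have h4 := hasDerivAt_pow 4 x
        have h5 := hasDerivAt_pow 5 x
        have h6 := hasDerivAt_pow 6 x
        have h7 := hasDerivAt_pow 7 x
        have h := (((((h3.const_mul (a / 3)).sub (h4.const_mul (a ^ 2 / 2))).add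
          (h5.const_mul (3 * a ^ 3 / 5))).sub (h6.const_mul (2 * a ^ 4 / 3))).add
          (h7.const_mul (5 * a ^ 5 / 7))).const_mul T
        convert h using 1
        · rfl
        · rfl
        · funext u; simp only [Pi.add_apply, Pi.sub_apply]; ring
        · push_cast; ring
      rw [intervalIntegral.integral_eq_sub_of_hasDerivAt hF
        (Continuous.intervalIntegrable (by fun_prop) _ _)]
      norm_num
      try ring
    linarith [hmono, le_of_eq hval]
  -- value of the second integral
  have hI2 : ∫ u in (0 : ℝ)..1, (T * u) * (s / 2 * u - u ^ 2 / 2)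
      = T * (s / 6 - 1 / 8) := by
    have hF : ∀ x ∈ uIcc (0 : ℝ) 1,
        HasDerivAt (fun u : ℝ => T * (s * u ^ 3 / 6 - u ^ 4 / 8))
          ((T * x) * (s / 2 * x - x ^ 2 / 2)) x := by
      intro x _
      have h3 := hasDerivAt_pow 3 x
      have h4 := hasDerivAt_pow 4 x
      have h := ((h3.const_mul (s / 6)).sub (h4.const_mul (1 / 8 : ℝ))).const_mul T
      convert h using 1
      · rfl
      · rfl
      · funext u; simp only [Pi.add_apply, Pi.sub_apply]; ring
      · push_cast; ring
    rw [intervalIntegral.integral_eq_sub_of_hasDerivAt hF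
      (Continuous.intervalIntegrable (by fun_prop) _ _)]
    norm_num
    try ring
  -- numeric conclusion
  have h3 : s ^ 3 = 2 * s := by linear_combination s * hs2
  have h4 : s ^ 4 = 4 := by linear_combination (s ^ 2 + 2) * hs2
  have h5 : s ^ 5 = 4 * s := by linear_combination (s ^ 3 + 2 * s) * hs2
  have key : a / 3 - a ^ 2 / 2 + 3 * a ^ 3 / 5 - 2 * a ^ 4 / 3 + 5 * a ^ 5 / 7
      + (s / 6 - 1 / 8) ≤ 1 / 5 := by
    rw [ha]
    nlinarith [h3, h4, h5, hs2, hsub, hslb]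
  calc ∫ t in Ioo (0 : ℝ) T, f t
      = (∫ t in (0 : ℝ)..(T / 2), g1 t) + ∫ t in (T / 2)..T, g2 t := hsplit
    _ ≤ T * (a / 3 - a ^ 2 / 2 + 3 * a ^ 3 / 5 - 2 * a ^ 4 / 3 + 5 * a ^ 5 / 7)
        + T * (s / 6 - 1 / 8) := by
        rw [hsub1, hsub2, hI2]
        exact add_le_add hI1 le_rfl
    _ = T * (a / 3 - a ^ 2 / 2 + 3 * a ^ 3 / 5 - 2 * a ^ 4 / 3 + 5 * a ^ 5 / 7
        + (s / 6 - 1 / 8)) := by ring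
    _ ≤ T * (1 / 5) := mul_le_mul_of_nonneg_left key hT.le
    _ = T / 5 := by ring
end

section
/- Let a > 0 and A > 0 be real numbers and let (μ_j)_{j≥1} be a nondecreasing sequence of positive real numbers such that ∑_{j=1}^∞ exp(−μ_j t) ≤ A·t^{−a} for every t > 0. Then for every integer k ≥ 1, μ_k ≥ (a/e)·(k/A)^{1/a}. -/
/-- Eigenvalue lower bound from a heat-trace bound: if `(μ_j)` (here `μ (j : ℕ)`
denotes the `(j+1)`-st eigenvalue) is a nondecreasing sequence of positive reals
with `∑_j exp(-μ_j t) ≤ A t^(-a)` for all `t > 0`, then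
`μ_k ≥ (a/e)·(k/A)^(1/a)` for every `k ≥ 1`. -/
theorem eigenvalue_lower_bound_of_trace
    (a A : ℝ) (ha : 0 < a) (hA : 0 < A)
    (μ : ℕ → ℝ) (hpos : ∀ j, 0 < μ j) (hmono : Monotone μ)
    (hsum : ∀ t : ℝ, 0 < t →
      ∑' j : ℕ, ENNReal.ofReal (Real.exp (-(μ j * t))) ≤ ENNReal.ofReal (A * t ^ (-a))) :
    ∀ k : ℕ, (a / Real.exp 1) * (((k : ℝ) + 1) / A) ^ (1 / a) ≤ μ k := by
  intro k
  set c : ℝ := (A / ((k : ℝ) + 1)) ^ (1 / a) with hc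
  have hk1 : (0:ℝ) < (k : ℝ) + 1 := by positivity
  have hcpos : 0 < c := Real.rpow_pos_of_pos (by positivity) _
  set t : ℝ := Real.exp 1 * c with ht
  have htpos : 0 < t := by positivity
  -- lower bound the tsum by (k+1) copies of the k-th term
  have hterm : ∀ j ∈ Finset.range (k + 1),
      ENNReal.ofReal (Real.exp (-(μ k * t))) ≤ ENNReal.ofReal (Real.exp (-(μ j * t))) := by
    intro j hj
    apply ENNReal.ofReal_le_ofReal
    apply Real.exp_le_exp.2
    have : μ j ≤ μ k := hmono (Nat.lt_succ_iff.mp (Finset.mem_range.mp hj))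
    nlinarith
  have hlb : (k + 1 : ℕ) * ENNReal.ofReal (Real.exp (-(μ k * t)))
      ≤ ∑' j : ℕ, ENNReal.ofReal (Real.exp (-(μ j * t))) := by
    calc (k + 1 : ℕ) * ENNReal.ofReal (Real.exp (-(μ k * t)))
        = ∑ j ∈ Finset.range (k + 1), ENNReal.ofReal (Real.exp (-(μ k * t))) := by
          simp [Finset.sum_const, nsmul_eq_mul]
      _ ≤ ∑ j ∈ Finset.range (k + 1), ENNReal.ofReal (Real.exp (-(μ j * t))) :=
          Finset.sum_le_sum hterm
      _ ≤ _ := ENNReal.sum_le_tsum _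
  have hmain : ((k : ℝ) + 1) * Real.exp (-(μ k * t)) ≤ A * t ^ (-a) := by
    have h := hlb.trans (hsum t htpos)
    rw [← ENNReal.ofReal_natCast (k + 1), ← ENNReal.ofReal_mul (by positivity),
      ENNReal.ofReal_le_ofReal_iff (by positivity)] at h
    convert h using 2
    push_cast
    ring
  -- compute t^(-a)
  have hca : c ^ (-a) = ((k : ℝ) + 1) / A := by
    rw [hc, ← Real.rpow_mul (by positivity)]
    rw [show (1 / a) * (-a) = -1 by field_simp]
    rw [Real.rpow_neg_one]
    rw [inv_div]
  have hta : t ^ (-a) = Real.exp (-a) * (((k : ℝ) + 1) / A) := by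
    rw [ht, Real.mul_rpow (Real.exp_pos 1).le hcpos.le, Real.exp_one_rpow, hca]
  have hmain2 : Real.exp (-(μ k * t)) ≤ Real.exp (-a) := by
    rw [hta] at hmain
    have : A * (Real.exp (-a) * (((k : ℝ) + 1) / A)) = ((k:ℝ)+1) * Real.exp (-a) := by
      field_simp
    rw [this] at hmain
    exact le_of_mul_le_mul_left hmain hk1
  have hat : a ≤ μ k * t := by
    have := Real.exp_le_exp.mp hmain2
    linarith
  -- conclude
  have hgoal : (a / Real.exp 1) * (((k : ℝ) + 1) / A) ^ (1 / a) = a / t := by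
    rw [ht]
    have : (((k : ℝ) + 1) / A) ^ (1 / a) = c⁻¹ := by
      rw [hc, show ((k:ℝ)+1)/A = (A/((k:ℝ)+1))⁻¹ by rw [inv_div],
        Real.inv_rpow (by positivity)]
    rw [this]
    field_simp
  rw [hgoal, div_le_iff₀ htpos]
  linarith
end

section
/- Let (X, μ) be a σ-finite measure space, let a > 1, C₃ > 0, C₆ > 0 be real numbers, and let K : (0,∞) × X × X → [0,∞) be measurable with K(t,x,y) = K(t,y,x) for all t, x, y, with ∫_X K(t,x,y) dμ(y) ≤ C₃ for all t > 0 and x ∈ X, and with K(t,x,y) ≤ C₆·t^{−a} for all t, x, y. Let 1 ≤ ℓ < 2a and set m := a/ℓ − 1/2 > 0. For measurable g : X → [0,∞) define Sg(x) := ∫₀^∞ t^{−1/2} ( ∫_X K(t,x,y)·g(y) dμ(y) ) dt. Then for every δ > 0 and every measurable g : X → [0,∞) with ∫_X g^ℓ dμ < ∞, μ({ x ∈ X : Sg(x) > δ }) ≤ 4^ℓ · C₃^ℓ · ( 2·C₃^{(ℓ−1)/ℓ}·C₆^{1/ℓ}/m )^{ℓ/(2m)} · δ^{−ℓ/(2m)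 − ℓ} · ( ∫_X g^ℓ dμ )^{1 + 1/(2m)}. -/
open MeasureTheory Set
open scoped ENNReal NNReal

/-- Weighted Hölder / Jensen step. -/
theorem wJensen {α : Type*} [MeasurableSpace α] (ν : Measure α) (ℓ : ℝ) (hℓ : 1 ≤ ℓ)
    (w F : α → ℝ≥0∞) (hw : AEMeasurable w ν) (hF : AEMeasurable F ν) :
    ∫⁻ x, w x * F x ∂ν
      ≤ (∫⁻ x, w x ∂ν) ^ ((ℓ - 1) / ℓ) * (∫⁻ x, w x * F x ^ ℓ ∂ν) ^ (1 / ℓ) := by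
  rcases eq_or_lt_of_le hℓ with h1 | h1
  · simp [← h1]
  · have hpq : ℓ.HolderConjugate (ℓ / (ℓ - 1)) := Real.HolderConjugate.conjExponent h1
    have hℓ0 : (0:ℝ) < ℓ := by linarith
    have key := ENNReal.lintegral_mul_le_Lp_mul_Lq ν hpq
      (f := fun x => (w x) ^ (1/ℓ) * F x) (g := fun x => (w x) ^ ((ℓ-1)/ℓ))
      ((hw.pow_const _).mul hF) (hw.pow_const _)
    have e1 : ∀ x : α, ((w x) ^ (1/ℓ) * F x) * (w x) ^ ((ℓ-1)/ℓ) = w x * F x := by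
      intro x
      have : (w x) ^ (1/ℓ) * (w x) ^ ((ℓ-1)/ℓ) = w x := by
        rw [← ENNReal.rpow_add_of_nonneg _ _ (by positivity)
          (div_nonneg (by linarith) (by linarith))]
        rw [show 1/ℓ + (ℓ-1)/ℓ = 1 by field_simp; ring]
        exact ENNReal.rpow_one _
      calc ((w x) ^ (1/ℓ) * F x) * (w x) ^ ((ℓ-1)/ℓ)
          = ((w x) ^ (1/ℓ) * (w x) ^ ((ℓ-1)/ℓ)) * F x := by ring
        _ = w x * F x := by rw [this]
    have e2 : ∀ x : α, ((w x) ^ (1/ℓ) * F x) ^ ℓ = w x * F x ^ ℓ := by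
      intro x
      rw [ENNReal.mul_rpow_of_nonneg _ _ hℓ0.le, ← ENNReal.rpow_mul,
        one_div_mul_cancel hℓ0.ne', ENNReal.rpow_one]
    have e3 : ∀ x : α, ((w x) ^ ((ℓ-1)/ℓ)) ^ (ℓ/(ℓ-1)) = w x := by
      intro x
      rw [← ENNReal.rpow_mul]
      rw [show (ℓ-1)/ℓ * (ℓ/(ℓ-1)) = 1 by
        rw [div_mul_div_comm, mul_comm (ℓ-1) ℓ, div_self (ne_of_gt (by nlinarith) :
          ℓ * (ℓ-1) ≠ 0)]]
      exact ENNReal.rpow_one _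
    simp only [Pi.mul_apply] at key
    simp only [e1, e2, e3] at key
    calc ∫⁻ x, w x * F x ∂ν
        ≤ (∫⁻ x, w x * F x ^ ℓ ∂ν) ^ (1/ℓ) * (∫⁻ x, w x ∂ν) ^ (1/(ℓ/(ℓ-1))) := key
      _ = (∫⁻ x, w x ∂ν) ^ ((ℓ-1)/ℓ) * (∫⁻ x, w x * F x ^ ℓ ∂ν) ^ (1/ℓ) := by
          rw [mul_comm, one_div_div]

theorem wJensenPow {α : Type*} [MeasurableSpace α] (ν : Measure α) (ℓ : ℝ) (hℓ : 1 ≤ ℓ)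
    (w F : α → ℝ≥0∞) (hw : AEMeasurable w ν) (hF : AEMeasurable F ν) :
    (∫⁻ x, w x * F x ∂ν) ^ ℓ
      ≤ (∫⁻ x, w x ∂ν) ^ (ℓ - 1) * ∫⁻ x, w x * F x ^ ℓ ∂ν := by
  have hℓ0 : (0:ℝ) < ℓ := by linarith
  have h := ENNReal.rpow_le_rpow (wJensen ν ℓ hℓ w F hw hF) hℓ0.le
  rwa [ENNReal.mul_rpow_of_nonneg _ _ hℓ0.le, ← ENNReal.rpow_mul, ← ENNReal.rpow_mul,
    div_mul_cancel₀ _ hℓ0.ne', one_div_mul_cancel hℓ0.ne', ENNReal.rpow_one] at h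

/-- Weak-type bound for the subordinated kernel operator
`Sg(x) = ∫₀^∞ t^(-1/2) (∫ K(t,x,y) g(y) dμ(y)) dt`: under the uniform `L¹` bound `C₃`
and the sup bound `C₆ t^(-a)`, with `1 ≤ ℓ < 2a` and `m = a/ℓ - 1/2`, one has
`μ({Sg > δ}) ≤ 4^ℓ C₃^ℓ (2 C₃^((ℓ-1)/ℓ) C₆^(1/ℓ)/m)^(ℓ/(2m)) δ^(-ℓ/(2m)-ℓ) (∫ g^ℓ)^(1+1/(2m))`. -/
theorem weak_type_subordinated_kernel
    {X : Type*} [MeasurableSpace X] (μ : Measure X) [SigmaFinite μ]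
    (a C₃ C₆ ℓ : ℝ) (ha : 1 < a) (hC₃ : 0 < C₃) (hC₆ : 0 < C₆)
    (hℓ1 : 1 ≤ ℓ) (hℓ2 : ℓ < 2 * a) (m : ℝ) (hm : m = a / ℓ - 1 / 2) (hm0 : 0 < m)
    (K : ℝ → X → X → ℝ)
    (hKmeas : Measurable fun p : ℝ × X × X => K p.1 p.2.1 p.2.2)
    (hK0 : ∀ t x y, 0 ≤ K t x y)
    (hKsymm : ∀ t x y, K t x y = K t y x)
    (hK1 : ∀ t : ℝ, 0 < t → ∀ x, ∫⁻ y, ENNReal.ofReal (K t x y) ∂μ ≤ ENNReal.ofReal C₃)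
    (hK2 : ∀ t : ℝ, 0 < t → ∀ x y, K t x y ≤ C₆ * t ^ (-a))
    (δ : ℝ) (hδ : 0 < δ)
    (g : X → ℝ) (hg : Measurable g) (hg0 : ∀ y, 0 ≤ g y)
    (hgl : ∫⁻ y, ENNReal.ofReal (g y) ^ ℓ ∂μ < ⊤) :
    μ {x : X | ENNReal.ofReal δ <
        ∫⁻ t in Set.Ioi (0 : ℝ),
          ENNReal.ofReal (t ^ (-(1 : ℝ) / 2)) *
            ∫⁻ y, ENNReal.ofReal (K t x y) * ENNReal.ofReal (g y) ∂μ}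
      ≤ ENNReal.ofReal (4 ^ ℓ * C₃ ^ ℓ *
            (2 * C₃ ^ ((ℓ - 1) / ℓ) * C₆ ^ (1 / ℓ) / m) ^ (ℓ / (2 * m)) *
            δ ^ (-(ℓ / (2 * m)) - ℓ)) *
          (∫⁻ y, ENNReal.ofReal (g y) ^ ℓ ∂μ) ^ (1 + 1 / (2 * m)) := by
  have hℓ0 : (0:ℝ) < ℓ := by linarith
  -- measurability preliminaries
  have hgm : Measurable fun y => ENNReal.ofReal (g y) := hg.ennreal_ofReal
  have hKm : ∀ t x, Measurable fun y => ENNReal.ofReal (K t x y) := by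
    intro t x
    exact (hKmeas.comp ((measurable_const (a := t)).prodMk
      ((measurable_const (a := x)).prodMk measurable_id))).ennreal_ofReal
  have hKm2 : ∀ t, Measurable fun p : X × X => ENNReal.ofReal (K t p.1 p.2) := by
    intro t
    exact (hKmeas.comp ((measurable_const (a := t)).prodMk
      (measurable_fst.prodMk measurable_snd))).ennreal_ofReal
  have hFnm : Measurable fun q : ℝ × X =>
      ∫⁻ y, ENNReal.ofReal (K q.1 q.2 y) * ENNReal.ofReal (g y) ∂μ := by
    apply Measurable.lintegral_prod_right'
      (f := fun p : (ℝ × X) × X => ENNReal.ofReal (K p.1.1 p.1.2 p.2) * ENNReal.ofReal (g p.2))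
    apply Measurable.fun_mul
    · exact (hKmeas.comp ((measurable_fst.comp measurable_fst).prodMk
        ((measurable_snd.comp measurable_fst).prodMk measurable_snd))).ennreal_ofReal
    · exact (hg.comp measurable_snd).ennreal_ofReal
  set Fn : ℝ → X → ℝ≥0∞ :=
    fun t x => ∫⁻ y, ENNReal.ofReal (K t x y) * ENNReal.ofReal (g y) ∂μ with hFndef
  have hFm1 : ∀ x, Measurable fun t => Fn t x :=
    fun x => hFnm.comp (measurable_id.prodMk measurable_const)
  have hFm2 : ∀ t, Measurable fun x => Fn t x :=
    fun t => hFnm.comp (measurable_const.prodMk measurable_id)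
  have hKmX : ∀ (t : ℝ) (y : X), Measurable fun x : X => ENNReal.ofReal (K t x y) :=
    fun t y => (hKmeas.comp (measurable_const.prodMk
      (measurable_id.prodMk measurable_const))).ennreal_ofReal
  have hwm' : ∀ p : ℝ, Measurable fun t : ℝ => ENNReal.ofReal (t ^ p) :=
    fun p => (measurable_id.pow_const p).ennreal_ofReal
  have hwm : Measurable fun t : ℝ => ENNReal.ofReal (t ^ (-(1:ℝ)/2)) := hwm' _
  set I := ∫⁻ y, ENNReal.ofReal (g y) ^ ℓ ∂μ with hIdef
  by_cases hI0 : I = 0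
  · -- trivial case : g = 0 a.e.
    have hg0ae : ∀ᵐ y ∂μ, ENNReal.ofReal (g y) = 0 := by
      have := (lintegral_eq_zero_iff (hgm.pow_const ℓ)).mp hI0
      filter_upwards [this] with y hy
      simpa [ENNReal.rpow_eq_zero_iff, hℓ0, hℓ0.not_gt, ENNReal.ofReal_ne_top] using hy
    have hFn0 : ∀ t x, Fn t x = 0 := by
      intro t x
      rw [hFndef]
      rw [lintegral_eq_zero_iff ((hKm t x).fun_mul hgm)]
      filter_upwards [hg0ae] with y hy
      simp [hy]
    have hempty : {x : X | ENNReal.ofReal δ <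
        ∫⁻ t in Set.Ioi (0 : ℝ),
          ENNReal.ofReal (t ^ (-(1 : ℝ) / 2)) *
            ∫⁻ y, ENNReal.ofReal (K t x y) * ENNReal.ofReal (g y) ∂μ} = ∅ := by
      ext x
      simp only [mem_setOf_eq, mem_empty_iff_false, iff_false, not_lt]
      have : (∫⁻ t in Set.Ioi (0 : ℝ),
          ENNReal.ofReal (t ^ (-(1 : ℝ) / 2)) *
            ∫⁻ y, ENNReal.ofReal (K t x y) * ENNReal.ofReal (g y) ∂μ) = 0 := by
        have : ∀ t : ℝ, ENNReal.ofReal (t ^ (-(1 : ℝ) / 2)) *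
            (∫⁻ y, ENNReal.ofReal (K t x y) * ENNReal.ofReal (g y) ∂μ) = 0 := by
          intro t; rw [show (∫⁻ y, ENNReal.ofReal (K t x y) * ENNReal.ofReal (g y) ∂μ) = Fn t x
            from rfl, hFn0 t x, mul_zero]
        simp only [this, lintegral_zero]
      rw [this]
      exact zero_le
    rw [hempty, measure_empty]
    exact zero_le
  · have hItop : I ≠ ⊤ := hgl.ne
    set Ir := I.toReal with hIrdef
    have hIr : 0 < Ir := ENNReal.toReal_pos hI0 hItop
    have hIeq : I = ENNReal.ofReal Ir := (ENNReal.ofReal_toReal hItop).symm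
    set C : ℝ := C₃ ^ ((ℓ - 1) / ℓ) * C₆ ^ (1 / ℓ) with hCdef
    have hCpos : 0 < C := by positivity
    set T : ℝ := (2 * C * Ir ^ (1/ℓ) / (m * δ)) ^ (1/m) with hTdef
    have hBpos : 0 < 2 * C * Ir ^ (1/ℓ) / (m * δ) := by positivity
    have hT : 0 < T := by positivity
    -- the key pointwise bound for the integrand at a fixed positive time
    have hptwise : ∀ t : ℝ, 0 < t → ∀ x : X,
        Fn t x ≤ ENNReal.ofReal (C * Ir ^ (1/ℓ) * t ^ (-(a/ℓ))) := by
      intro t ht x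
      have htr : (0:ℝ) < t ^ (-a) := Real.rpow_pos_of_pos ht _
      have h3 : (∫⁻ y, ENNReal.ofReal (K t x y) * ENNReal.ofReal (g y) ^ ℓ ∂μ)
          ≤ ENNReal.ofReal (C₆ * t ^ (-a)) * I := by
        calc ∫⁻ y, ENNReal.ofReal (K t x y) * ENNReal.ofReal (g y) ^ ℓ ∂μ
            ≤ ∫⁻ y, ENNReal.ofReal (C₆ * t ^ (-a)) * ENNReal.ofReal (g y) ^ ℓ ∂μ :=
              lintegral_mono fun y =>
                mul_le_mul' (ENNReal.ofReal_le_ofReal (hK2 t ht x y)) le_rfl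
          _ = ENNReal.ofReal (C₆ * t ^ (-a)) * I := lintegral_const_mul _ (hgm.pow_const ℓ)
      calc Fn t x
          ≤ (∫⁻ y, ENNReal.ofReal (K t x y) ∂μ) ^ ((ℓ-1)/ℓ) *
            (∫⁻ y, ENNReal.ofReal (K t x y) * ENNReal.ofReal (g y) ^ ℓ ∂μ) ^ (1/ℓ) :=
            wJensen μ ℓ hℓ1 _ _ (hKm t x).aemeasurable hgm.aemeasurable
        _ ≤ (ENNReal.ofReal C₃) ^ ((ℓ-1)/ℓ) * (ENNReal.ofReal (C₆ * t ^ (-a)) * I) ^ (1/ℓ) :=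
            mul_le_mul' (ENNReal.rpow_le_rpow (hK1 t ht x)
              (div_nonneg (by linarith) hℓ0.le)) (ENNReal.rpow_le_rpow h3 (by positivity))
        _ = ENNReal.ofReal (C * Ir ^ (1/ℓ) * t ^ (-(a/ℓ))) := by
            rw [hIeq, ← ENNReal.ofReal_mul (by positivity),
              ENNReal.ofReal_rpow_of_pos hC₃, ENNReal.ofReal_rpow_of_pos (by positivity),
              ← ENNReal.ofReal_mul (by positivity)]
            congr 1
            rw [Real.mul_rpow (by positivity) hIr.le, Real.mul_rpow hC₆.le htr.le,
              ← Real.rpow_mul ht.le, show -a * (1/ℓ) = -(a/ℓ) by ring, hCdef]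
            ring
    -- tail bound
    have htail : ∀ x : X,
        (∫⁻ t in Set.Ioi T, ENNReal.ofReal (t ^ (-(1 : ℝ) / 2)) * Fn t x)
          ≤ ENNReal.ofReal (δ / 2) := by
      have hIoiInt : (∫⁻ t in Set.Ioi T, ENNReal.ofReal (t ^ (-(1+m)))) =
          ENNReal.ofReal (T ^ (-m) / m) := by
        have hint : IntegrableOn (fun t : ℝ => t ^ (-(1+m))) (Set.Ioi T) :=
          integrableOn_Ioi_rpow_of_lt (by linarith) hT
        rw [← ofReal_integral_eq_lintegral_ofReal hint ?_]
        · rw [integral_Ioi_rpow_of_lt (by linarith) hT]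
          congr 1
          rw [show -(1+m) + 1 = -m by ring]
          rw [neg_div, div_neg, neg_neg]
        · filter_upwards [ae_restrict_mem measurableSet_Ioi] with t htmem
          exact Real.rpow_nonneg (le_of_lt (hT.trans htmem)) _
      intro x
      calc (∫⁻ t in Set.Ioi T, ENNReal.ofReal (t ^ (-(1 : ℝ) / 2)) * Fn t x)
          ≤ ∫⁻ t in Set.Ioi T, ENNReal.ofReal (C * Ir ^ (1/ℓ)) *
              ENNReal.ofReal (t ^ (-(1+m))) := by
            apply setLIntegral_mono ((hwm' (-(1+m))).const_mul _)
            intro t htmem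
            have ht : 0 < t := hT.trans htmem
            refine le_trans (mul_le_mul' le_rfl (hptwise t ht x)) ?_
            rw [← ENNReal.ofReal_mul (Real.rpow_nonneg ht.le _),
              ← ENNReal.ofReal_mul (by positivity)]
            apply ENNReal.ofReal_le_ofReal
            rw [show -(1+m) = (-(1:ℝ)/2) + (-(a/ℓ)) by rw [hm]; ring, Real.rpow_add ht]
            exact le_of_eq (by ring)
        _ = ENNReal.ofReal (C * Ir ^ (1/ℓ)) * ENNReal.ofReal (T ^ (-m) / m) := by
            rw [lintegral_const_mul _ (hwm' (-(1+m))), hIoiInt]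
        _ ≤ ENNReal.ofReal (δ / 2) := by
            rw [← ENNReal.ofReal_mul (by positivity)]
            apply ENNReal.ofReal_le_ofReal
            have hTm : T ^ (-m) = (2 * C * Ir ^ (1/ℓ) / (m * δ))⁻¹ := by
              rw [hTdef, ← Real.rpow_mul hBpos.le,
                show 1/m * -m = -1 by field_simp, Real.rpow_neg_one]
            rw [hTm]
            rw [inv_div]
            apply le_of_eq
            field_simp
        
    -- splitting
    have hsubset : {x : X | ENNReal.ofReal δ <
        ∫⁻ t in Set.Ioi (0 : ℝ), ENNReal.ofReal (t ^ (-(1 : ℝ) / 2)) * Fn t x}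
        ⊆ {x : X | ENNReal.ofReal (δ/2) <
            ∫⁻ t in Set.Ioc 0 T, ENNReal.ofReal (t ^ (-(1 : ℝ) / 2)) * Fn t x} := by
      intro x hx
      simp only [mem_setOf_eq] at hx ⊢
      by_contra hcon
      push_neg at hcon
      have hsplit : (∫⁻ t in Set.Ioi (0:ℝ), ENNReal.ofReal (t ^ (-(1 : ℝ) / 2)) * Fn t x)
          = (∫⁻ t in Set.Ioc 0 T, ENNReal.ofReal (t ^ (-(1 : ℝ) / 2)) * Fn t x)
            + ∫⁻ t in Set.Ioi T, ENNReal.ofReal (t ^ (-(1 : ℝ) / 2)) * Fn t x := by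
        rw [← Set.Ioc_union_Ioi_eq_Ioi hT.le,
          lintegral_union measurableSet_Ioi Set.Ioc_disjoint_Ioi_same]
      rw [hsplit] at hx
      have h2 := add_le_add hcon (htail x)
      rw [← ENNReal.ofReal_add (by positivity) (by positivity),
        show δ/2 + δ/2 = δ by ring] at h2
      exact absurd (lt_of_lt_of_le hx h2) (lt_irrefl _)
    -- weight mass on (0, T]
    have hA : (∫⁻ t in Set.Ioc (0:ℝ) T, ENNReal.ofReal (t ^ (-(1 : ℝ) / 2)))
        = ENNReal.ofReal (2 * T ^ (1/2 : ℝ)) := by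
      have hio : IntegrableOn (fun t : ℝ => t ^ (-(1:ℝ)/2)) (Set.Ioc 0 T) :=
        (intervalIntegrable_iff_integrableOn_Ioc_of_le hT.le).mp
          (intervalIntegral.intervalIntegrable_rpow' (by norm_num))
      rw [← ofReal_integral_eq_lintegral_ofReal hio ?_]
      · congr 1
        rw [← intervalIntegral.integral_of_le hT.le,
          integral_rpow (Or.inl (by norm_num : (-1:ℝ) < -1/2)),
          show (-(1:ℝ)/2 + 1) = 1/2 by norm_num, Real.zero_rpow (by norm_num)]
        ring
      · filter_upwards [ae_restrict_mem measurableSet_Ioc] with t htmem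
        exact Real.rpow_nonneg htmem.1.le _
    -- Schur bound
    have schur : ∀ t : ℝ, 0 < t →
        (∫⁻ x, (Fn t x) ^ ℓ ∂μ) ≤ (ENNReal.ofReal C₃) ^ ℓ * I := by
      intro t ht
      have hinner : Measurable fun x =>
          ∫⁻ y, ENNReal.ofReal (K t x y) * ENNReal.ofReal (g y) ^ ℓ ∂μ := by
        apply Measurable.lintegral_prod_right'
          (f := fun p : X × X => ENNReal.ofReal (K t p.1 p.2) * ENNReal.ofReal (g p.2) ^ ℓ)
        exact (hKm2 t).mul (((hg.comp measurable_snd).ennreal_ofReal).pow_const ℓ)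
      have hswap : AEMeasurable (Function.uncurry fun x y =>
          ENNReal.ofReal (K t x y) * ENNReal.ofReal (g y) ^ ℓ) (μ.prod μ) :=
        ((hKm2 t).mul (((hg.comp measurable_snd).ennreal_ofReal).pow_const ℓ)).aemeasurable
      have hC₃pow : (ENNReal.ofReal C₃) ^ (ℓ-1) * ENNReal.ofReal C₃
          = (ENNReal.ofReal C₃) ^ ℓ := by
        nth_rewrite 2 [← ENNReal.rpow_one (ENNReal.ofReal C₃)]
        rw [← ENNReal.rpow_add_of_nonneg _ _ (by linarith) zero_le_one, sub_add_cancel]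
      have step1 : ∀ x, Fn t x ^ ℓ ≤ (ENNReal.ofReal C₃) ^ (ℓ - 1) *
          ∫⁻ y, ENNReal.ofReal (K t x y) * ENNReal.ofReal (g y) ^ ℓ ∂μ := by
        intro x
        refine (wJensenPow μ ℓ hℓ1 _ _ (hKm t x).aemeasurable hgm.aemeasurable).trans ?_
        exact mul_le_mul' (ENNReal.rpow_le_rpow (hK1 t ht x) (by linarith)) le_rfl
      calc ∫⁻ x, Fn t x ^ ℓ ∂μ
          ≤ ∫⁻ x, (ENNReal.ofReal C₃) ^ (ℓ-1) *
              ∫⁻ y, ENNReal.ofReal (K t x y) * ENNReal.ofReal (g y) ^ ℓ ∂μ ∂μ :=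
            lintegral_mono step1
        _ = (ENNReal.ofReal C₃) ^ (ℓ-1) * ∫⁻ x,
              ∫⁻ y, ENNReal.ofReal (K t x y) * ENNReal.ofReal (g y) ^ ℓ ∂μ ∂μ :=
            lintegral_const_mul _ hinner
        _ = (ENNReal.ofReal C₃) ^ (ℓ-1) * ∫⁻ y,
              ∫⁻ x, ENNReal.ofReal (K t x y) * ENNReal.ofReal (g y) ^ ℓ ∂μ ∂μ := by
            rw [lintegral_lintegral_swap hswap]
        _ = (ENNReal.ofReal C₃) ^ (ℓ-1) * ∫⁻ y,
              ENNReal.ofReal (g y) ^ ℓ * ∫⁻ x, ENNReal.ofReal (K t x y) ∂μ ∂μ := by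
            congr 1
            apply lintegral_congr
            intro y
            rw [lintegral_mul_const _ (hKmX t y), mul_comm]
        _ ≤ (ENNReal.ofReal C₃) ^ (ℓ-1) * ∫⁻ y,
              ENNReal.ofReal (g y) ^ ℓ * ENNReal.ofReal C₃ ∂μ := by
            apply mul_le_mul' le_rfl
            apply lintegral_mono
            intro y
            apply mul_le_mul' le_rfl
            have : (fun x => ENNReal.ofReal (K t x y)) = fun x => ENNReal.ofReal (K t y x) :=
              funext fun x => by rw [hKsymm]
            rw [this]
            exact hK1 t ht y
        _ = (ENNReal.ofReal C₃) ^ (ℓ-1) * (I * ENNReal.ofReal C₃) := by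
            rw [lintegral_mul_const _ (hgm.pow_const ℓ)]
        _ = (ENNReal.ofReal C₃) ^ ℓ * I := by
            rw [show (ENNReal.ofReal C₃) ^ (ℓ-1) * (I * ENNReal.ofReal C₃)
              = ((ENNReal.ofReal C₃) ^ (ℓ-1) * ENNReal.ofReal C₃) * I by ring, hC₃pow]
    -- L^ℓ bound of the short-time part
    have hT1norm : (∫⁻ x, (∫⁻ t in Set.Ioc 0 T,
          ENNReal.ofReal (t ^ (-(1 : ℝ) / 2)) * Fn t x) ^ ℓ ∂μ)
        ≤ (ENNReal.ofReal (2 * T ^ (1/2 : ℝ))) ^ ℓ * ((ENNReal.ofReal C₃) ^ ℓ * I) := by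
      have hmeasp : Measurable fun p : X × ℝ =>
          ENNReal.ofReal (p.2 ^ (-(1:ℝ)/2)) * (Fn p.2 p.1) ^ ℓ :=
        (hwm.comp measurable_snd).mul
          ((hFnm.comp (measurable_snd.prodMk measurable_fst)).pow_const ℓ)
      have hmeas2 : Measurable fun x => ∫⁻ t in Set.Ioc (0:ℝ) T,
          ENNReal.ofReal (t ^ (-(1:ℝ)/2)) * (Fn t x) ^ ℓ :=
        Measurable.lintegral_prod_right'
          (f := fun p : X × ℝ => ENNReal.ofReal (p.2 ^ (-(1:ℝ)/2)) * (Fn p.2 p.1) ^ ℓ) hmeasp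
      have jensen : ∀ x, (∫⁻ t in Set.Ioc (0:ℝ) T,
            ENNReal.ofReal (t ^ (-(1:ℝ)/2)) * Fn t x) ^ ℓ
          ≤ (ENNReal.ofReal (2 * T ^ (1/2:ℝ))) ^ (ℓ-1) *
            ∫⁻ t in Set.Ioc (0:ℝ) T, ENNReal.ofReal (t ^ (-(1:ℝ)/2)) * (Fn t x) ^ ℓ := by
        intro x
        have h := wJensenPow (volume.restrict (Set.Ioc 0 T)) ℓ hℓ1 _ _
          hwm.aemeasurable (hFm1 x).aemeasurable
        rwa [hA] at h
      calc ∫⁻ x, (∫⁻ t in Set.Ioc (0:ℝ) T,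
            ENNReal.ofReal (t ^ (-(1:ℝ)/2)) * Fn t x) ^ ℓ ∂μ
          ≤ ∫⁻ x, ((ENNReal.ofReal (2 * T ^ (1/2:ℝ))) ^ (ℓ-1) *
              ∫⁻ t in Set.Ioc (0:ℝ) T, ENNReal.ofReal (t ^ (-(1:ℝ)/2)) * (Fn t x) ^ ℓ) ∂μ :=
            lintegral_mono jensen
        _ = (ENNReal.ofReal (2 * T ^ (1/2:ℝ))) ^ (ℓ-1) * ∫⁻ x, (∫⁻ t in Set.Ioc (0:ℝ) T,
              ENNReal.ofReal (t ^ (-(1:ℝ)/2)) * (Fn t x) ^ ℓ) ∂μ :=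
            lintegral_const_mul _ hmeas2
        _ = (ENNReal.ofReal (2 * T ^ (1/2:ℝ))) ^ (ℓ-1) * ∫⁻ t in Set.Ioc (0:ℝ) T,
              ∫⁻ x, ENNReal.ofReal (t ^ (-(1:ℝ)/2)) * (Fn t x) ^ ℓ ∂μ := by
            rw [lintegral_lintegral_swap hmeasp.aemeasurable]
        _ = (ENNReal.ofReal (2 * T ^ (1/2:ℝ))) ^ (ℓ-1) * ∫⁻ t in Set.Ioc (0:ℝ) T,
              ENNReal.ofReal (t ^ (-(1:ℝ)/2)) * ∫⁻ x, (Fn t x) ^ ℓ ∂μ := by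
            congr 1
            apply lintegral_congr
            intro t
            rw [lintegral_const_mul _ ((hFm2 t).pow_const ℓ)]
        _ ≤ (ENNReal.ofReal (2 * T ^ (1/2:ℝ))) ^ (ℓ-1) * ∫⁻ t in Set.Ioc (0:ℝ) T,
              ENNReal.ofReal (t ^ (-(1:ℝ)/2)) * ((ENNReal.ofReal C₃) ^ ℓ * I) := by
            apply mul_le_mul' le_rfl
            apply setLIntegral_mono (hwm.mul_const _)
            intro t htmem
            exact mul_le_mul' le_rfl (schur t htmem.1)
        _ = (ENNReal.ofReal (2 * T ^ (1/2:ℝ))) ^ (ℓ-1) * (ENNReal.ofReal (2 * T ^ (1/2:ℝ)) *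
              ((ENNReal.ofReal C₃) ^ ℓ * I)) := by
            rw [lintegral_mul_const _ hwm, hA]
        _ = (ENNReal.ofReal (2 * T ^ (1/2:ℝ))) ^ ℓ * ((ENNReal.ofReal C₃) ^ ℓ * I) := by
            rw [show (ENNReal.ofReal (2 * T ^ (1/2:ℝ))) ^ (ℓ-1) *
                (ENNReal.ofReal (2 * T ^ (1/2:ℝ)) * ((ENNReal.ofReal C₃) ^ ℓ * I))
              = ((ENNReal.ofReal (2 * T ^ (1/2:ℝ))) ^ (ℓ-1) * ENNReal.ofReal (2 * T ^ (1/2:ℝ)))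
                * ((ENNReal.ofReal C₃) ^ ℓ * I) by ring]
            congr 1
            nth_rewrite 2 [← ENNReal.rpow_one (ENNReal.ofReal (2 * T ^ (1/2:ℝ)))]
            rw [← ENNReal.rpow_add_of_nonneg _ _ (by linarith) zero_le_one, sub_add_cancel]
    -- Chebyshev
    have cheb : μ {x : X | ENNReal.ofReal (δ/2) <
          ∫⁻ t in Set.Ioc 0 T, ENNReal.ofReal (t ^ (-(1 : ℝ) / 2)) * Fn t x}
        ≤ ((ENNReal.ofReal (δ/2)) ^ ℓ)⁻¹ *
          ((ENNReal.ofReal (2 * T ^ (1/2 : ℝ))) ^ ℓ * ((ENNReal.ofReal C₃) ^ ℓ * I)) := by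
      have hT1meas : Measurable fun x => ∫⁻ t in Set.Ioc (0:ℝ) T,
          ENNReal.ofReal (t ^ (-(1:ℝ)/2)) * Fn t x :=
        Measurable.lintegral_prod_right'
          (f := fun p : X × ℝ => ENNReal.ofReal (p.2 ^ (-(1:ℝ)/2)) * Fn p.2 p.1)
          ((hwm.comp measurable_snd).mul (hFnm.comp (measurable_snd.prodMk measurable_fst)))
      have hε0 : ((ENNReal.ofReal (δ/2)) ^ ℓ) ≠ 0 :=
        (ENNReal.rpow_pos (ENNReal.ofReal_pos.mpr (by linarith)) ENNReal.ofReal_ne_top).ne'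
      have hεtop : ((ENNReal.ofReal (δ/2)) ^ ℓ) ≠ ⊤ :=
        ENNReal.rpow_ne_top_of_nonneg hℓ0.le ENNReal.ofReal_ne_top
      have hsub2 : {x : X | ENNReal.ofReal (δ/2) < ∫⁻ t in Set.Ioc (0:ℝ) T,
            ENNReal.ofReal (t ^ (-(1:ℝ)/2)) * Fn t x}
          ⊆ {x : X | (ENNReal.ofReal (δ/2)) ^ ℓ ≤ (∫⁻ t in Set.Ioc (0:ℝ) T,
            ENNReal.ofReal (t ^ (-(1:ℝ)/2)) * Fn t x) ^ ℓ} :=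
        fun x hx => ENNReal.rpow_le_rpow (le_of_lt hx) hℓ0.le
      have hcheb := mul_meas_ge_le_lintegral₀ (μ := μ) ((hT1meas.pow_const ℓ).aemeasurable)
        ((ENNReal.ofReal (δ/2)) ^ ℓ)
      calc μ {x : X | ENNReal.ofReal (δ/2) < ∫⁻ t in Set.Ioc (0:ℝ) T,
            ENNReal.ofReal (t ^ (-(1:ℝ)/2)) * Fn t x}
          ≤ μ {x : X | (ENNReal.ofReal (δ/2)) ^ ℓ ≤ (∫⁻ t in Set.Ioc (0:ℝ) T,
            ENNReal.ofReal (t ^ (-(1:ℝ)/2)) * Fn t x) ^ ℓ} := measure_mono hsub2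
        _ = ((ENNReal.ofReal (δ/2)) ^ ℓ)⁻¹ * ((ENNReal.ofReal (δ/2)) ^ ℓ *
              μ {x : X | (ENNReal.ofReal (δ/2)) ^ ℓ ≤ (∫⁻ t in Set.Ioc (0:ℝ) T,
                ENNReal.ofReal (t ^ (-(1:ℝ)/2)) * Fn t x) ^ ℓ}) := by
            rw [← mul_assoc, ENNReal.inv_mul_cancel hε0 hεtop, one_mul]
        _ ≤ ((ENNReal.ofReal (δ/2)) ^ ℓ)⁻¹ * ∫⁻ x, (∫⁻ t in Set.Ioc (0:ℝ) T,
              ENNReal.ofReal (t ^ (-(1:ℝ)/2)) * Fn t x) ^ ℓ ∂μ :=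
            mul_le_mul' le_rfl hcheb
        _ ≤ ((ENNReal.ofReal (δ/2)) ^ ℓ)⁻¹ *
            ((ENNReal.ofReal (2 * T ^ (1/2 : ℝ))) ^ ℓ * ((ENNReal.ofReal C₃) ^ ℓ * I)) :=
            mul_le_mul' le_rfl hT1norm
    -- final arithmetic
    have final : ((ENNReal.ofReal (δ/2)) ^ ℓ)⁻¹ *
          ((ENNReal.ofReal (2 * T ^ (1/2 : ℝ))) ^ ℓ * ((ENNReal.ofReal C₃) ^ ℓ * I))
        ≤ ENNReal.ofReal (4 ^ ℓ * C₃ ^ ℓ *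
            (2 * C₃ ^ ((ℓ - 1) / ℓ) * C₆ ^ (1 / ℓ) / m) ^ (ℓ / (2 * m)) *
            δ ^ (-(ℓ / (2 * m)) - ℓ)) * I ^ (1 + 1 / (2 * m)) := by
      have h2T : (0:ℝ) < 2 * T ^ (1/2:ℝ) := by positivity
      have hbase : 2 * C₃ ^ ((ℓ - 1) / ℓ) * C₆ ^ (1 / ℓ) / m = 2 * C / m := by
        rw [hCdef]; ring
      have hQ : (0:ℝ) ≤ 4 ^ ℓ * C₃ ^ ℓ * (2 * C / m) ^ (ℓ / (2 * m)) *
          δ ^ (-(ℓ / (2 * m)) - ℓ) := by positivity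
      have keyreal : ((δ/2)^ℓ)⁻¹ * ((2*T^(1/2:ℝ))^ℓ * (C₃^ℓ * Ir)) =
          (4^ℓ * C₃^ℓ * (2*C/m)^(ℓ/(2*m)) * δ^(-(ℓ/(2*m))-ℓ)) * Ir^(1+1/(2*m)) := by
        have e2T : (2*T^(1/2:ℝ))^ℓ = 2^ℓ *
            ((2*C/m)^(ℓ/(2*m)) * (δ^(-(ℓ/(2*m))) * Ir^(1/(2*m)))) := by
          rw [Real.mul_rpow (by norm_num) (Real.rpow_nonneg hT.le _)]
          congr 1
          rw [← Real.rpow_mul hT.le, hTdef, ← Real.rpow_mul hBpos.le,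
            show 1/m * (1/2*ℓ) = ℓ/(2*m) by ring,
            show 2*C*Ir^(1/ℓ)/(m*δ) = (2*C/m) * (δ⁻¹ * Ir^(1/ℓ)) by ring,
            Real.mul_rpow (by positivity) (by positivity),
            Real.mul_rpow (by positivity) (by positivity),
            Real.inv_rpow hδ.le, ← Real.rpow_neg hδ.le,
            ← Real.rpow_mul hIr.le, show 1/ℓ * (ℓ/(2*m)) = 1/(2*m) by
              field_simp]
        have einv : ((δ/2)^ℓ)⁻¹ = 2^ℓ * δ^(-ℓ) := by
          rw [Real.div_rpow hδ.le (by norm_num : (0:ℝ) ≤ 2), inv_div,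
            Real.rpow_neg hδ.le]
          ring
        have e4 : (4:ℝ)^ℓ = 2^ℓ * 2^ℓ := by
          rw [← Real.mul_rpow (by norm_num) (by norm_num)]; norm_num
        have eδ : δ^(-(ℓ/(2*m))) * δ^(-ℓ) = δ^(-(ℓ/(2*m)) - ℓ) := by
          rw [← Real.rpow_add hδ, sub_eq_add_neg]
        have eIr : Ir^(1+1/(2*m)) = Ir * Ir^(1/(2*m)) := by
          rw [Real.rpow_add hIr, Real.rpow_one]
        rw [einv, e2T, e4, ← eδ, eIr]
        ring
      have eL : ENNReal.ofReal (((δ/2)^ℓ)⁻¹ * ((2*T^(1/2:ℝ))^ℓ * (C₃^ℓ * Ir)))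
          = ((ENNReal.ofReal (δ/2)) ^ ℓ)⁻¹ * ((ENNReal.ofReal (2 * T ^ (1/2 : ℝ))) ^ ℓ *
            ((ENNReal.ofReal C₃) ^ ℓ * ENNReal.ofReal Ir)) := by
        rw [ENNReal.ofReal_mul (by positivity), ENNReal.ofReal_mul (by positivity),
          ENNReal.ofReal_mul (by positivity), ENNReal.ofReal_inv_of_pos (by positivity),
          ← ENNReal.ofReal_rpow_of_pos (by linarith : (0:ℝ) < δ/2),
          ← ENNReal.ofReal_rpow_of_pos h2T, ← ENNReal.ofReal_rpow_of_pos hC₃]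
      have eR : ENNReal.ofReal ((4^ℓ * C₃^ℓ * (2*C/m)^(ℓ/(2*m)) * δ^(-(ℓ/(2*m))-ℓ)) *
            Ir^(1+1/(2*m)))
          = ENNReal.ofReal (4^ℓ * C₃^ℓ * (2*C/m)^(ℓ/(2*m)) * δ^(-(ℓ/(2*m))-ℓ)) *
            (ENNReal.ofReal Ir) ^ (1+1/(2*m)) := by
        rw [ENNReal.ofReal_mul hQ, ← ENNReal.ofReal_rpow_of_pos hIr]
      rw [hbase, hIeq, ← eL, ← eR, keyreal]
    exact le_trans (le_trans (measure_mono hsubset) cheb) final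
end
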